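/- Let α, F ∈ ℂ with α ∉ ℤ∖{0} and F ≠ 0, let k ∈ ℤ∖{0}, a ∈ ℂ∖{0}, m ∈ ℂ, and let b, c ∈ ℂ satisfy kb = 1 and 1 − k − kFc = 0. On V define linear operators 𝕃_n, 𝕀_n by 𝕃_n(v_t) = (t+n)v_{n+t} for t ≠ 0, 𝕃_n(v_0) = n(n+α)v_n, 𝕀_n(v_t) = 0 for t ≠ 0, 𝕀_n(v_0) = nF·v_n, and define the linear map φ by φ(v_t) = aᵗ·m·v_{kt}. Then for all n ∈ ℤ: φ ∘ 𝕃_n = ((1/k)aⁿ·𝕃_{kn} + aⁿcn·𝕀_{kn}) ∘ φ and φ ∘ 𝕀_n = aⁿb·𝕀_{kn} ∘ φ; consequently (φ∘𝕃_n)(v_t) = (t+n)·a^{n+t}·m·v_{k(n+t)} for t ≠ 0, (φ∘𝕃_n)(v_0) = n(n+α)·aⁿ·m·v_{kn}, (φ∘𝕀_n)(v_t) = 0 for t ≠ 0, and (φ∘𝕀_n)(v_0) = nF·aⁿ·m·v_{kn}. -/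

import Mathlib

/-- The ℂ-vector space with basis `{v t : t ∈ ℤ}` (finitely supported functions ℤ → ℂ). -/
abbrev V : Type := ℤ →₀ ℂ

/-- The basis vector `v t`. -/
noncomputable def v (t : ℤ) : V := Finsupp.single t 1

/-- The linear operator on `V` determined by its values on the basis vectors. -/
noncomputable def op (f : ℤ → V) : V →ₗ[ℂ] V := Finsupp.lift V ℂ ℤ f

/-- The operator `𝕃 n` of the module `A(α,F)`:
`𝕃 n (v t) = (t+n) v (n+t)` for `t ≠ 0`, `𝕃 n (v 0) = n(n+α) v n`. -/
noncomputable def Lop (α : ℂ) (n : ℤ) : V →ₗ[ℂ] V :=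
  op fun t => if t = 0 then ((n : ℂ) * (n + α)) • v n else ((t : ℂ) + n) • v (n + t)

/-- The operator `𝕀 n` of the module `A(α,F)`:
`𝕀 n (v t) = 0` for `t ≠ 0`, `𝕀 n (v 0) = nF • v n`. -/
noncomputable def Iop (F : ℂ) (n : ℤ) : V →ₗ[ℂ] V :=
  op fun t => if t = 0 then ((n : ℂ) * F) • v n else 0

/-- The twisting linear map `φ (v t) = aᵗ m • v (kt)`. -/
noncomputable def φmap (a m : ℂ) (k : ℤ) : V →ₗ[ℂ] V :=
  op fun t => (a ^ t * m) • v (k * t)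

/-!
Every operator involved is of the form `op f`, so each identity is checked on the basis vectors
`v t`. For `t ≠ 0` both sides are the same multiple of `v (k * (n + t))` once `a ^ (n + t)` is
split as `a ^ n * a ^ t`. On `v 0` the `𝕃 (k n)` term gives `n (k n + α)` where `n (n + α)` is
wanted, and the `𝕀 (k n)` correction `c n · k n F` removes the surplus `(k - 1) n²` exactly
because `1 - k - k F c = 0`; similarly `k b = 1` rescales `𝕀 (k n)` back to `𝕀 n`.
-/

lemma op_v (f : ℤ → V) (t : ℤ) : op f (v t) = f t := by
  rw [op, v, Finsupp.lift_apply, Finsupp.sum_single_index (zero_smul ℂ (f t)), one_smul]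

lemma linearMap_ext_v {f g : V →ₗ[ℂ] V} (h : ∀ t, f (v t) = g (v t)) : f = g :=
  Finsupp.lhom_ext' fun t => LinearMap.ext_ring (h t)

section BasisValues

variable (α F a m : ℂ) (k n : ℤ)

lemma Lop_v_zero : Lop α n (v 0) = ((n : ℂ) * (n + α)) • v n := by
  rw [Lop, op_v, if_pos rfl]

lemma Lop_v {t : ℤ} (ht : t ≠ 0) : Lop α n (v t) = ((t : ℂ) + n) • v (n + t) := by
  rw [Lop, op_v, if_neg ht]

lemma Iop_v_zero : Iop F n (v 0) = ((n : ℂ) * F) • v n := by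
  rw [Iop, op_v, if_pos rfl]

lemma Iop_v {t : ℤ} (ht : t ≠ 0) : Iop F n (v t) = 0 := by
  rw [Iop, op_v, if_neg ht]

lemma φmap_v (t : ℤ) : φmap a m k (v t) = (a ^ t * m) • v (k * t) :=
  op_v _ t

lemma φmap_Lop_v_zero :
    φmap a m k (Lop α n (v 0)) = ((n : ℂ) * (n + α) * a ^ n * m) • v (k * n) := by
  rw [Lop_v_zero, map_smul, φmap_v, smul_smul, ← mul_assoc]

lemma φmap_Lop_v {t : ℤ} (ht : t ≠ 0) :
    φmap a m k (Lop α n (v t)) = (((t : ℂ) + n) * a ^ (n + t) * m) • v (k * (n + t)) := by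
  rw [Lop_v α n ht, map_smul, φmap_v, smul_smul, ← mul_assoc]

lemma φmap_Iop_v_zero : φmap a m k (Iop F n (v 0)) = ((n : ℂ) * F * a ^ n * m) • v (k * n) := by
  rw [Iop_v_zero, map_smul, φmap_v, smul_smul, ← mul_assoc]

lemma φmap_Iop_v {t : ℤ} (ht : t ≠ 0) : φmap a m k (Iop F n (v t)) = 0 := by
  rw [Iop_v F n ht, map_zero]

end BasisValues

section Intertwining

variable {α F a b c : ℂ} {k : ℤ} (m : ℂ)

lemma φmap_comp_Lop (hk : k ≠ 0) (ha : a ≠ 0) (hc : 1 - (k : ℂ) - k * F * c = 0) (n : ℤ) :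
    φmap a m k ∘ₗ Lop α n
      = ((1 / (k : ℂ) * a ^ n) • Lop α (k * n) + (a ^ n * c * n) • Iop F (k * n)) ∘ₗ φmap a m k := by
  have hk' : (k : ℂ) ≠ 0 := Int.cast_ne_zero.mpr hk
  refine linearMap_ext_v fun t => ?_
  simp only [LinearMap.comp_apply, LinearMap.add_apply, LinearMap.smul_apply, φmap_v, map_smul]
  rcases eq_or_ne t 0 with rfl | ht
  · rw [φmap_Lop_v_zero, mul_zero, Lop_v_zero, Iop_v_zero, zpow_zero, one_mul]
    simp only [smul_smul, ← add_smul]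
    congr 1
    push_cast
    field_simp
    linear_combination (m * (n : ℂ) ^ 2) * hc
  · have hkt : k * t ≠ 0 := mul_ne_zero hk ht
    rw [φmap_Lop_v (ht := ht), Lop_v α _ hkt, Iop_v F _ hkt, smul_zero, add_zero,
      smul_smul, smul_smul, ← mul_add]
    congr 1
    push_cast
    rw [zpow_add₀ ha]
    field_simp

lemma φmap_comp_Iop (hk : k ≠ 0) (hb : (k : ℂ) * b = 1) (n : ℤ) :
    φmap a m k ∘ₗ Iop F n = ((a ^ n * b) • Iop F (k * n)) ∘ₗ φmap a m k := by
  refine linearMap_ext_v fun t => ?_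
  simp only [LinearMap.comp_apply, LinearMap.smul_apply, φmap_v, map_smul]
  rcases eq_or_ne t 0 with rfl | ht
  · rw [φmap_Iop_v_zero, mul_zero, Iop_v_zero, zpow_zero, one_mul, smul_smul, smul_smul]
    congr 1
    push_cast
    linear_combination (-(n : ℂ) * F * a ^ n * m) * hb
  · rw [φmap_Iop_v (ht := ht), Iop_v F _ (mul_ne_zero hk ht), smul_zero, smul_zero]

end Intertwining

theorem A_aF_intertwine_general (α F : ℂ)
    (k : ℤ) (hk : k ≠ 0) (a : ℂ) (ha : a ≠ 0) (m b c : ℂ)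
    (hb : (k : ℂ) * b = 1) (hc : 1 - (k : ℂ) - k * F * c = 0) :
    (∀ n : ℤ, φmap a m k ∘ₗ Lop α n
        = ((1 / (k : ℂ) * a ^ n) • Lop α (k * n) + (a ^ n * c * n) • Iop F (k * n))
            ∘ₗ φmap a m k) ∧
    (∀ n : ℤ, φmap a m k ∘ₗ Iop F n = ((a ^ n * b) • Iop F (k * n)) ∘ₗ φmap a m k) ∧
    (∀ n t : ℤ, t ≠ 0 → φmap a m k (Lop α n (v t))
        = (((t : ℂ) + n) * a ^ (n + t) * m) • v (k * (n + t))) ∧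
    (∀ n : ℤ, φmap a m k (Lop α n (v 0)) = ((n : ℂ) * (n + α) * a ^ n * m) • v (k * n)) ∧
    (∀ n t : ℤ, t ≠ 0 → φmap a m k (Iop F n (v t)) = 0) ∧
    (∀ n : ℤ, φmap a m k (Iop F n (v 0)) = ((n : ℂ) * F * a ^ n * m) • v (k * n)) :=
  ⟨φmap_comp_Lop m hk ha hc, φmap_comp_Iop m hk hb, fun n _ ht => φmap_Lop_v α a m k n ht,
    φmap_Lop_v_zero α a m k, fun n _ ht => φmap_Iop_v F a m k n ht, φmap_Iop_v_zero F a m k⟩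

theorem A_aF_intertwine (α F : ℂ) (hα : ∀ z : ℤ, z ≠ 0 → α ≠ (z : ℂ)) (hF : F ≠ 0)
    (k : ℤ) (hk : k ≠ 0) (a : ℂ) (ha : a ≠ 0) (m b c : ℂ)
    (hb : (k : ℂ) * b = 1) (hc : 1 - (k : ℂ) - k * F * c = 0) :
    (∀ n : ℤ, φmap a m k ∘ₗ Lop α n
        = ((1 / (k : ℂ) * a ^ n) • Lop α (k * n) + (a ^ n * c * n) • Iop F (k * n))
            ∘ₗ φmap a m k) ∧
    (∀ n : ℤ, φmap a m k ∘ₗ Iop F n = ((a ^ n * b) • Iop F (k * n)) ∘ₗ φmap a m k) ∧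
    (∀ n t : ℤ, t ≠ 0 → φmap a m k (Lop α n (v t))
        = (((t : ℂ) + n) * a ^ (n + t) * m) • v (k * (n + t))) ∧
    (∀ n : ℤ, φmap a m k (Lop α n (v 0)) = ((n : ℂ) * (n + α) * a ^ n * m) • v (k * n)) ∧
    (∀ n t : ℤ, t ≠ 0 → φmap a m k (Iop F n (v t)) = 0) ∧
    (∀ n : ℤ, φmap a m k (Iop F n (v 0)) = ((n : ℂ) * F * a ^ n * m) • v (k * n)) :=
  A_aF_intertwine_general α F k hk a ha m b c hb hc
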